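/- Suppose x ∈ ℝᵐ is supported on T∪Δ, y = Ax + w, and Q_{T,λ}(Δ) is invertible. Let c(Δ) be the regularized least-squares estimate supported on T∪Δ, i.e., c(Δ)_{T∪Δ} = Q_{T,λ}(Δ)^{-1}(A_{T∪Δ}'y + [λμ̂_T; 0_Δ]). Then ‖c(Δ) − x‖₂ ≤ λ‖Q_{T,λ}(Δ)^{-1}‖₂ · ‖x_T − μ̂_T‖₂ + ‖Q_{T,λ}(Δ)^{-1} A_{T∪Δ}'‖₂ · ‖w‖₂. -/

import Mathlib

/-!
As `x` is supported on `T ∪ Δ`, `A x = A_{T∪Δ} x_{T∪Δ}`, hence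
`A_{T∪Δ}'y + [λμ̂_T; 0] = Q x_{T∪Δ} + A_{T∪Δ}'w − λ[x_T − μ̂_T; 0]`.
Applying `Q⁻¹` gives `c(Δ)_{T∪Δ} − x_{T∪Δ} = Q⁻¹A_{T∪Δ}'w − λQ⁻¹[x_T − μ̂_T; 0]`, and both
`c(Δ)` and `x` vanish off `T ∪ Δ`; the triangle inequality and the operator-norm bounds finish
the proof.
-/

open Matrix BigOperators Finset

noncomputable section

abbrev Idx {m : ℕ} (T : Finset (Fin m)) := {j : Fin m // j ∈ T}

/-- Submatrix of `A` consisting of the columns indexed by `T`. -/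
def colsub {n m : ℕ} (A : Matrix (Fin n) (Fin m) ℝ) (T : Finset (Fin m)) :
    Matrix (Fin n) (Idx T) ℝ := Matrix.of fun i j => A i j.1

/-- Euclidean (ℓ2) norm of a finitely indexed vector. -/
def l2 {α : Type*} [Fintype α] (v : α → ℝ) : ℝ := Real.sqrt (∑ i, v i ^ 2)

/-- ℓ1 norm. -/
def l1 {α : Type*} [Fintype α] (v : α → ℝ) : ℝ := ∑ i, |v i|

/-- ℓ∞ (sup) norm. -/
def linf {α : Type*} [Fintype α] (v : α → ℝ) : ℝ := ⨆ i, |v i|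

/-- Spectral (ℓ2 operator) norm of a matrix. -/
def spec {α β : Type*} [Fintype α] [Fintype β] [DecidableEq β] (M : Matrix α β ℝ) : ℝ :=
  ‖LinearMap.toContinuousLinearMap (Matrix.toEuclideanLin M)‖

/-- `Q_{T,λ}(S) = A_{T∪S}' A_{T∪S} + λ·diag(I_T, 0_S)`. -/
def Qmat {n m : ℕ} (A : Matrix (Fin n) (Fin m) ℝ) (T S : Finset (Fin m)) (lam : ℝ) :
    Matrix (Idx (T ∪ S)) (Idx (T ∪ S)) ℝ :=
  (colsub A (T ∪ S))ᵀ * colsub A (T ∪ S) +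
    lam • (Matrix.of (fun i j => if i = j ∧ (i : Fin m) ∈ T then (1 : ℝ) else 0) :
      Matrix (Idx (T ∪ S)) (Idx (T ∪ S)) ℝ)

/-- `M_{T,λ} = I − A_T (A_T'A_T + λ I_T)⁻¹ A_T'`. -/
def Mmat {n m : ℕ} (A : Matrix (Fin n) (Fin m) ℝ) (T : Finset (Fin m)) (lam : ℝ) :
    Matrix (Fin n) (Fin n) ℝ :=
  1 - colsub A T * ((colsub A T)ᵀ * colsub A T + lam • 1)⁻¹ * (colsub A T)ᵀ

/-- `P_{T,λ}(Δ) = (A_Δ' M A_Δ)⁻¹`. -/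
def Pmat {n m : ℕ} (A : Matrix (Fin n) (Fin m) ℝ) (T Δ : Finset (Fin m)) (lam : ℝ) :
    Matrix (Idx Δ) (Idx Δ) ℝ :=
  ((colsub A Δ)ᵀ * Mmat A T lam * colsub A Δ)⁻¹

/-- The regularized least-squares estimate supported on `T ∪ S`:
`c_{T∪S} = Q⁻¹ (A_{T∪S}' y + [λμ̂_T ; 0_S])`, zero outside `T ∪ S`. -/
def cvec {n m : ℕ} (A : Matrix (Fin n) (Fin m) ℝ) (T S : Finset (Fin m)) (lam : ℝ)
    (y : Fin n → ℝ) (μ : Fin m → ℝ) : Fin m → ℝ :=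
  fun i => if h : i ∈ T ∪ S then
    (Qmat A T S lam)⁻¹.mulVec
      (fun j => (∑ k, A k j.1 * y k) + (if (j : Fin m) ∈ T then lam * μ j.1 else 0)) ⟨i, h⟩
  else 0

/-- The reg-mod-BPDN objective
`L(b) = γ‖b_{T^c}‖₁ + (1/2)‖y − Ab‖₂² + (λ/2)‖b_T − μ̂_T‖₂²`. -/
def Lobj {n m : ℕ} (A : Matrix (Fin n) (Fin m) ℝ) (T : Finset (Fin m)) (γ lam : ℝ)
    (y : Fin n → ℝ) (μ : Fin m → ℝ) (b : Fin m → ℝ) : ℝ :=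
  γ * (∑ i ∈ Tᶜ, |b i|) + (1/2) * (∑ i, (y i - A.mulVec b i) ^ 2) +
    (lam/2) * (∑ i ∈ T, (b i - μ i) ^ 2)

/-- The quadratic part `L₁(b) = (1/2)‖y − Ab‖₂² + (λ/2)‖b_T − μ̂_T‖₂²`. -/
def L1obj {n m : ℕ} (A : Matrix (Fin n) (Fin m) ℝ) (T : Finset (Fin m)) (lam : ℝ)
    (y : Fin n → ℝ) (μ : Fin m → ℝ) (b : Fin m → ℝ) : ℝ :=
  (1/2) * (∑ i, (y i - A.mulVec b i) ^ 2) + (lam/2) * (∑ i ∈ T, (b i - μ i) ^ 2)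

/-- `ERC_{T,λ}(Δ) = 1 − max_{ω∉T∪Δ} ‖P(Δ) A_Δ' M A_ω‖₁`. -/
def ERC {n m : ℕ} (A : Matrix (Fin n) (Fin m) ℝ) (T Δ : Finset (Fin m)) (lam : ℝ) : ℝ :=
  1 - ⨆ ω : Idx ((T ∪ Δ)ᶜ),
    l1 ((Pmat A T Δ lam * (colsub A Δ)ᵀ * Mmat A T lam).mulVec (fun i => A i ω.1))

/-- `f₁(Δ)`. -/
def f1 {n m : ℕ} (A : Matrix (Fin n) (Fin m) ℝ) (T Δ : Finset (Fin m)) (lam : ℝ) : ℝ :=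
  Real.sqrt
    (spec (((colsub A T)ᵀ * colsub A T + lam • 1)⁻¹ * (colsub A T)ᵀ * colsub A Δ *
        Pmat A T Δ lam) ^ 2 + spec (Pmat A T Δ lam) ^ 2)

/-- `f₂(Δ) = ‖Q⁻¹‖₂`. -/
def f2 {n m : ℕ} (A : Matrix (Fin n) (Fin m) ℝ) (T Δ : Finset (Fin m)) (lam : ℝ) : ℝ :=
  spec ((Qmat A T Δ lam)⁻¹)

/-- `f₃(Δ) = ‖Q⁻¹ A_{T∪Δ}'‖₂`. -/
def f3 {n m : ℕ} (A : Matrix (Fin n) (Fin m) ℝ) (T Δ : Finset (Fin m)) (lam : ℝ) : ℝ :=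
  spec ((Qmat A T Δ lam)⁻¹ * (colsub A (T ∪ Δ))ᵀ)

/-- `f₄(Δ̃) = sqrt(‖Q(Δ̃)⁻¹ A_{T∪Δ̃}' A_{Δ∖Δ̃}‖₂² + 1)`. -/
def f4 {n m : ℕ} (A : Matrix (Fin n) (Fin m) ℝ) (T Δ Δt : Finset (Fin m)) (lam : ℝ) : ℝ :=
  Real.sqrt
    (spec ((Qmat A T Δt lam)⁻¹ * (colsub A (T ∪ Δt))ᵀ * colsub A (Δ \ Δt)) ^ 2 + 1)

/-- Numerator of `γ*`: `‖A_{(T∪Δ)^c}'(y − A c(Δ))‖_∞`. -/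
def gammaNum {n m : ℕ} (A : Matrix (Fin n) (Fin m) ℝ) (T Δ : Finset (Fin m)) (lam : ℝ)
    (y : Fin n → ℝ) (μ : Fin m → ℝ) : ℝ :=
  linf (fun j : Idx ((T ∪ Δ)ᶜ) =>
    ∑ i, A i j.1 * (y i - A.mulVec (cvec A T Δ lam y μ) i))

/-- `γ*_{T,λ}(Δ)`. -/
def gammaStar {n m : ℕ} (A : Matrix (Fin n) (Fin m) ℝ) (T Δ : Finset (Fin m)) (lam : ℝ)
    (y : Fin n → ℝ) (μ : Fin m → ℝ) : ℝ :=
  gammaNum A T Δ lam y μ / ERC A T Δ lam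


section L2

variable {α β : Type*} [Fintype α] [Fintype β]

lemma l2_eq_norm_toLp (v : α → ℝ) : l2 v = ‖WithLp.toLp 2 v‖ := by
  simp [l2, EuclideanSpace.norm_eq, Real.norm_eq_abs, sq_abs]

lemma l2_mulVec_le [DecidableEq β] (M : Matrix α β ℝ) (v : β → ℝ) :
    l2 (M *ᵥ v) ≤ spec M * l2 v := by
  rw [l2_eq_norm_toLp, l2_eq_norm_toLp]
  exact (LinearMap.toContinuousLinearMap (Matrix.toEuclideanLin M)).le_opNorm (WithLp.toLp 2 v)

lemma l2_sub_smul_le {γ : Type*} [Fintype γ] [DecidableEq β] [DecidableEq γ]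
    (M : Matrix α β ℝ) (N : Matrix α γ ℝ) (v : β → ℝ) (u : γ → ℝ) {c : ℝ} (hc : 0 ≤ c) :
    l2 (M *ᵥ v - c • N *ᵥ u) ≤ c * spec N * l2 u + spec M * l2 v := by
  calc l2 (M *ᵥ v - c • N *ᵥ u)
      ≤ l2 (M *ᵥ v) + c * l2 (N *ᵥ u) := by
        simp only [l2_eq_norm_toLp, WithLp.toLp_sub, WithLp.toLp_smul]
        grw [norm_sub_le, norm_smul, Real.norm_of_nonneg hc]
    _ ≤ spec M * l2 v + c * (spec N * l2 u) := by
        gcongr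
        · exact l2_mulVec_le M v
        · exact l2_mulVec_le N u
    _ = c * spec N * l2 u + spec M * l2 v := by ring

lemma l2_subtype_of_support {p : α → Prop} [Fintype {i // p i}] {v : α → ℝ}
    (hv : ∀ i, ¬ p i → v i = 0) : l2 (fun i : {i // p i} => v i) = l2 v := by
  classical
  unfold l2
  congr 1
  rw [← Finset.sum_subtype (univ.filter p) (by simp) (fun i => v i ^ 2)]
  exact Finset.sum_filter_of_ne fun i _ hi => by_contra fun hp => hi (by simp [hv i hp])

lemma l2_subtype (p : α → Prop) [DecidablePred p] [Fintype {i // p i}] (v : α → ℝ) :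
    l2 (fun i : {i // p i} => v i) = l2 fun i => if p i then v i else 0 := by
  rw [← l2_subtype_of_support (p := p) fun i hi => if_neg hi]
  congr 1
  ext i
  exact (if_pos i.2).symm

end L2

lemma of_ite_eq_and_mulVec {ι R : Type*} [Fintype ι] [DecidableEq ι] [Semiring R]
    (p : ι → Prop) [DecidablePred p] (v : ι → R) :
    (Matrix.of fun i j => if i = j ∧ p i then (1 : R) else 0) *ᵥ v =
      fun i => if p i then v i else 0 := by
  ext i
  by_cases hi : p i <;> simp [Matrix.mulVec, dotProduct, hi]

section Estimate

variable {n m : ℕ} (A : Matrix (Fin n) (Fin m) ℝ) (T S : Finset (Fin m)) (lam : ℝ)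

/-- The vector `[v_T; 0_S]` indexed by `T ∪ S`. -/
def padT (v : Fin m → ℝ) : Idx (T ∪ S) → ℝ := fun j => if (j : Fin m) ∈ T then v j else 0

lemma padT_sub (v u : Fin m → ℝ) : padT T S (v - u) = padT T S v - padT T S u := by
  ext j
  by_cases hj : (j : Fin m) ∈ T <;> simp [padT, hj]

lemma colsub_mulVec_of_support {x : Fin m → ℝ} (hx : ∀ i ∉ S, x i = 0) :
    colsub A S *ᵥ (fun j : Idx S => x j) = A *ᵥ x := by
  ext k
  simp only [Matrix.mulVec, dotProduct, colsub, Matrix.of_apply]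
  rw [Finset.sum_coe_sort S fun i => A k i * x i]
  exact Finset.sum_subset (Finset.subset_univ S) fun i _ hi => by simp [hx i hi]

lemma colsub_transpose_mulVec (y : Fin n → ℝ) :
    (colsub A S)ᵀ *ᵥ y = fun j : Idx S => ∑ k, A k j * y k := by
  ext j
  simp [Matrix.mulVec, dotProduct, colsub]

lemma Qmat_mulVec_of_support {x : Fin m → ℝ} (hx : ∀ i ∉ T ∪ S, x i = 0) :
    Qmat A T S lam *ᵥ (fun j : Idx (T ∪ S) => x j) =
      (colsub A (T ∪ S))ᵀ *ᵥ (A *ᵥ x) + lam • padT T S x := by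
  rw [Qmat, Matrix.add_mulVec, ← Matrix.mulVec_mulVec, colsub_mulVec_of_support A _ hx,
    Matrix.smul_mulVec, of_ite_eq_and_mulVec]
  rfl

lemma cvec_restrict (y : Fin n → ℝ) (μ : Fin m → ℝ) :
    (fun j : Idx (T ∪ S) => cvec A T S lam y μ j) =
      (Qmat A T S lam)⁻¹ *ᵥ
        ((colsub A (T ∪ S))ᵀ *ᵥ y + lam • padT T S μ) := by
  ext j
  rw [cvec, dif_pos j.2, colsub_transpose_mulVec]
  congr 2
  ext i
  simp [padT]

lemma cvec_sub_restrict_eq {x μ : Fin m → ℝ} {w y : Fin n → ℝ} (hx : ∀ i ∉ T ∪ S, x i = 0)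
    (hy : y = A *ᵥ x + w) (hQ : IsUnit (Qmat A T S lam)) :
    (fun j : Idx (T ∪ S) => cvec A T S lam y μ j - x j) =
      ((Qmat A T S lam)⁻¹ * (colsub A (T ∪ S))ᵀ) *ᵥ w -
        lam • (Qmat A T S lam)⁻¹ *ᵥ padT T S (x - μ) := by
  set Q := Qmat A T S lam
  set B := colsub A (T ∪ S)
  have hb : Bᵀ *ᵥ y + lam • padT T S μ =
      Q *ᵥ (fun j : Idx (T ∪ S) => x j) + (Bᵀ *ᵥ w - lam • padT T S (x - μ)) := by
    rw [Qmat_mulVec_of_support A T S lam hx, hy, Matrix.mulVec_add, padT_sub, smul_sub]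
    abel
  have hQQ : Q⁻¹ * Q = 1 := Matrix.nonsing_inv_mul Q ((Matrix.isUnit_iff_isUnit_det Q).mp hQ)
  calc (fun j : Idx (T ∪ S) => cvec A T S lam y μ j - x j)
      = Q⁻¹ *ᵥ (Q *ᵥ (fun j : Idx (T ∪ S) => x j) + (Bᵀ *ᵥ w - lam • padT T S (x - μ))) -
          fun j : Idx (T ∪ S) => x j := by
        rw [← hb, ← cvec_restrict]
        rfl
    _ = (Q⁻¹ * Bᵀ) *ᵥ w - lam • Q⁻¹ *ᵥ padT T S (x - μ) := by
        rw [Matrix.mulVec_add, Matrix.mulVec_mulVec, hQQ, Matrix.one_mulVec, add_sub_cancel_left,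
          Matrix.mulVec_sub, Matrix.mulVec_smul, Matrix.mulVec_mulVec]

end Estimate

theorem stmt6_general {n m : ℕ} (A : Matrix (Fin n) (Fin m) ℝ) (T Δ : Finset (Fin m))
    (lam : ℝ) (hlam : 0 ≤ lam)
    (x : Fin m → ℝ) (w y : Fin n → ℝ) (μ : Fin m → ℝ)
    (hx : ∀ i ∉ T ∪ Δ, x i = 0)
    (hy : y = fun i => A.mulVec x i + w i)
    (hQ : IsUnit (Qmat A T Δ lam)) :
    l2 (fun i => cvec A T Δ lam y μ i - x i) ≤
      lam * f2 A T Δ lam * l2 (fun j : Idx T => x j.1 - μ j.1) +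
        f3 A T Δ lam * l2 w := by
  have hc : ∀ i ∉ T ∪ Δ, cvec A T Δ lam y μ i - x i = 0 := fun i hi => by
    simp [cvec, hi, hx i hi]
  have hu : l2 (padT T Δ (x - μ)) = l2 (fun j : Idx T => x j - μ j) :=
    (l2_subtype_of_support (p := (· ∈ T ∪ Δ)) (v := fun i => if i ∈ T then x i - μ i else 0)
      fun i hi => if_neg fun hT => hi (mem_union_left Δ hT)).trans
      (l2_subtype (· ∈ T) fun i => x i - μ i).symm
  rw [← l2_subtype_of_support (p := (· ∈ T ∪ Δ)) hc, cvec_sub_restrict_eq A T Δ lam hx hy hQ,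
    ← hu, f2, f3]
  exact l2_sub_smul_le _ _ _ _ hlam

/-- `‖c(Δ) − x‖₂ ≤ λ‖Q⁻¹‖₂‖x_T − μ̂_T‖₂ + ‖Q⁻¹A_{T∪Δ}'‖₂‖w‖₂`. -/
theorem stmt6 {n m : ℕ} (A : Matrix (Fin n) (Fin m) ℝ) (T Δ : Finset (Fin m))
    (hTΔ : Disjoint T Δ) (lam : ℝ) (hlam : 0 ≤ lam)
    (x : Fin m → ℝ) (w y : Fin n → ℝ) (μ : Fin m → ℝ)
    (hx : ∀ i ∉ T ∪ Δ, x i = 0)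
    (hy : y = fun i => A.mulVec x i + w i)
    (hQ : IsUnit (Qmat A T Δ lam)) :
    l2 (fun i => cvec A T Δ lam y μ i - x i) ≤
      lam * f2 A T Δ lam * l2 (fun j : Idx T => x j.1 - μ j.1) +
        f3 A T Δ lam * l2 w :=
  stmt6_general A T Δ lam hlam x w y μ hx hy hQ
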